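/- Let T be a bounded linear operator on a complex Hilbert space H and N a norm on B(H). Then dw_N(T) ≥ (1/2) sqrt( (3/4) N(T)² + 2 N(|T|)⁴ + (d₁ + d₂) + 2|m₁ − m₂| ), where m₁ = max{N(Re T)² + N(|T|)⁴, w_N(T)²}, m₂ = max{N(Im T)², N(|T|)⁴}, d₁ = |N(Re T)² + N(|T|)⁴ − w_N(T)²|, d₂ = |N(Im T)² − N(|T|)⁴|. -/

import Mathlib

open ContinuousLinearMap Complex

variable {H : Type*} [NormedAddCommGroup H] [InnerProductSpace ℂ H] [CompleteSpace H]

/-- Real part of an operator: `Re(A) = (A + A*)/2`. -/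
noncomputable def reOp (A : H →L[ℂ] H) : H →L[ℂ] H := (2 : ℂ)⁻¹ • (A + adjoint A)

/-- Imaginary part of an operator: `Im(A) = (A - A*)/(2i)`. -/
noncomputable def imOp (A : H →L[ℂ] H) : H →L[ℂ] H := (2 * I)⁻¹ • (A - adjoint A)

/-- Modulus of an operator: `|A| = (A* A)^{1/2}`. -/
noncomputable def absOp (A : H →L[ℂ] H) : H →L[ℂ] H := CFC.sqrt (adjoint A * A)

/-- Generalized numerical radius. -/
noncomputable def wN (N : (H →L[ℂ] H) → ℝ) (T : H →L[ℂ] H) : ℝ :=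
  ⨆ θ : ℝ, N (reOp (Complex.exp (θ * I) • T))

/-- Generalized Davis–Wielandt radius. -/
noncomputable def dwN (N : (H →L[ℂ] H) → ℝ) (T : H →L[ℂ] H) : ℝ :=
  ⨆ θ : ℝ, Real.sqrt ((N (reOp (Complex.exp (θ * I) • T))) ^ 2
    + (N (reOp (Complex.exp (θ * I) • absOp T))) ^ 4)

/-! Proof idea: evaluating the supremum defining `dw_N(T)` at `θ = 0` and `θ = -π/2` gives
`N(Re T)² + N(|T|)⁴ ≤ dw_N(T)²` and `N(Im T) ≤ dw_N(T)`, and trivially `w_N(T) ≤ dw_N(T)`; hence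
`m₁, m₂ ≤ dw_N(T)²`. Writing `2 max(x, y) = x + y + |x - y|` turns `d₁ + d₂ + 2|m₁ - m₂|` into
`4 max(m₁, m₂) - N(Re T)² - N(Im T)² - w_N(T)² - 2 N(|T|)⁴`, and the remaining term `(3/4) N(T)²` is
absorbed by `N(T) ≤ N(Re T) + N(Im T)` and `N(T) ≤ 2 w_N(T)`. -/

lemma abs_sub_add_abs_sub_add_two_mul_abs_max_sub_max_le {x u y v M : ℝ}
    (hx : x ≤ M) (hu : u ≤ M) (hy : y ≤ M) (hv : v ≤ M) :
    |x - u| + |y - v| + 2 * |max x u - max y v| ≤ 4 * M - (x + u + y + v) := by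
  have hmax : max (max x u) (max y v) ≤ M := max_le (max_le hx hu) (max_le hy hv)
  linarith [max_add_min x u, max_sub_min_eq_abs' x u, max_add_min y v, max_sub_min_eq_abs' y v,
    max_add_min (max x u) (max y v), max_sub_min_eq_abs' (max x u) (max y v)]

lemma isSelfAdjoint_absOp (A : H →L[ℂ] H) : IsSelfAdjoint (absOp A) :=
  IsSelfAdjoint.of_nonneg (CFC.sqrt_nonneg _)

lemma reOp_of_isSelfAdjoint {A : H →L[ℂ] H} (hA : IsSelfAdjoint A) : reOp A = A := by
  rw [reOp, ← star_eq_adjoint, hA.star_eq, ← two_smul ℂ, smul_smul]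
  norm_num

lemma imOp_of_isSelfAdjoint {A : H →L[ℂ] H} (hA : IsSelfAdjoint A) : imOp A = 0 := by
  rw [imOp, ← star_eq_adjoint, hA.star_eq, sub_self, smul_zero]

lemma inv_two_mul_I : ((2 : ℂ) * I)⁻¹ = -(2⁻¹ * I) := by
  rw [mul_inv, Complex.inv_I]; ring

lemma reOp_add_I_smul_imOp (A : H →L[ℂ] H) : reOp A + I • imOp A = A := by
  simp only [reOp, imOp, inv_two_mul_I]
  match_scalars <;> norm_num [Complex.ext_iff]

lemma reOp_exp_mul_I_smul (θ : ℝ) (A : H →L[ℂ] H) :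
    reOp (Complex.exp (θ * I) • A) = (Real.cos θ : ℂ) • reOp A - (Real.sin θ : ℂ) • imOp A := by
  simp only [reOp, imOp, ← star_eq_adjoint, star_smul, Complex.exp_mul_I,
    ← Complex.ofReal_cos, ← Complex.ofReal_sin, star_add, Complex.star_def,
    Complex.conj_ofReal, inv_two_mul_I]
  match_scalars <;> simp [Complex.ext_iff] <;> constructor <;> ring

lemma reOp_exp_zero_smul (A : H →L[ℂ] H) : reOp (Complex.exp ((0 : ℝ) * I) • A) = reOp A := by
  simp

lemma reOp_exp_neg_pi_div_two_smul (A : H →L[ℂ] H) :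
    reOp (Complex.exp ((-(Real.pi / 2) : ℝ) * I) • A) = imOp A := by
  rw [reOp_exp_mul_I_smul]
  simp

section Seminorm

variable (p : Seminorm ℂ (H →L[ℂ] H))

lemma seminorm_le_reOp_add_imOp (A : H →L[ℂ] H) : p A ≤ p (reOp A) + p (imOp A) := by
  calc p A = p (reOp A + I • imOp A) := by rw [reOp_add_I_smul_imOp]
    _ ≤ p (reOp A) + p (I • imOp A) := map_add_le_add p _ _
    _ = p (reOp A) + p (imOp A) := by rw [map_smul_eq_mul, Complex.norm_I, one_mul]

lemma seminorm_reOp_exp_mul_I_smul_le (θ : ℝ) (A : H →L[ℂ] H) :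
    p (reOp (Complex.exp (θ * I) • A)) ≤ p (reOp A) + p (imOp A) := by
  rw [reOp_exp_mul_I_smul]
  calc p ((Real.cos θ : ℂ) • reOp A - (Real.sin θ : ℂ) • imOp A)
      ≤ p ((Real.cos θ : ℂ) • reOp A) + p ((Real.sin θ : ℂ) • imOp A) := map_sub_le_add p _ _
    _ = |Real.cos θ| * p (reOp A) + |Real.sin θ| * p (imOp A) := by
      simp only [map_smul_eq_mul, Complex.norm_real, Real.norm_eq_abs]
    _ ≤ 1 * p (reOp A) + 1 * p (imOp A) := by
      gcongr
      exacts [Real.abs_cos_le_one θ, Real.abs_sin_le_one θ]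
    _ = p (reOp A) + p (imOp A) := by ring

lemma seminorm_reOp_exp_mul_I_smul_absOp_le (θ : ℝ) (A : H →L[ℂ] H) :
    p (reOp (Complex.exp (θ * I) • absOp A)) ≤ p (absOp A) := by
  simpa [reOp_of_isSelfAdjoint (isSelfAdjoint_absOp A),
    imOp_of_isSelfAdjoint (isSelfAdjoint_absOp A)]
    using seminorm_reOp_exp_mul_I_smul_le p θ (absOp A)

lemma le_wN (T : H →L[ℂ] H) (θ : ℝ) : p (reOp (Complex.exp (θ * I) • T)) ≤ wN p T :=
  le_ciSup (f := fun θ : ℝ ↦ p (reOp (Complex.exp (θ * I) • T)))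
    ⟨_, Set.forall_mem_range.2 fun θ ↦ seminorm_reOp_exp_mul_I_smul_le p θ T⟩ θ

lemma le_dwN (T : H →L[ℂ] H) (θ : ℝ) :
    Real.sqrt (p (reOp (Complex.exp (θ * I) • T)) ^ 2
      + p (reOp (Complex.exp (θ * I) • absOp T)) ^ 4) ≤ dwN p T := by
  refine le_ciSup (f := fun θ : ℝ ↦ Real.sqrt (p (reOp (Complex.exp (θ * I) • T)) ^ 2
      + p (reOp (Complex.exp (θ * I) • absOp T)) ^ 4))
    ⟨Real.sqrt ((p (reOp T) + p (imOp T)) ^ 2 + p (absOp T) ^ 4),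
      Set.forall_mem_range.2 fun θ ↦ ?_⟩ θ
  gcongr
  exacts [seminorm_reOp_exp_mul_I_smul_le p θ T, seminorm_reOp_exp_mul_I_smul_absOp_le p θ T]

lemma wN_le_dwN (T : H →L[ℂ] H) : wN p T ≤ dwN p T :=
  ciSup_le fun θ ↦ (Real.le_sqrt_of_sq_le (le_add_of_nonneg_right (by positivity))).trans
    (le_dwN p T θ)

lemma sq_reOp_add_pow_four_absOp_le_sq_dwN (T : H →L[ℂ] H) :
    p (reOp T) ^ 2 + p (absOp T) ^ 4 ≤ dwN p T ^ 2 := by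
  have h := le_dwN p T 0
  rwa [reOp_exp_zero_smul, reOp_exp_zero_smul, reOp_of_isSelfAdjoint (isSelfAdjoint_absOp T),
    Real.sqrt_le_left ((Real.sqrt_nonneg _).trans h)] at h

lemma imOp_le_dwN (T : H →L[ℂ] H) : p (imOp T) ≤ dwN p T := by
  have h := le_dwN p T (-(Real.pi / 2))
  rwa [reOp_exp_neg_pi_div_two_smul, reOp_exp_neg_pi_div_two_smul,
    imOp_of_isSelfAdjoint (isSelfAdjoint_absOp T), map_zero, zero_pow four_ne_zero, add_zero,
    Real.sqrt_sq (apply_nonneg p _)] at h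

lemma seminorm_le_two_mul_wN (T : H →L[ℂ] H) : p T ≤ 2 * wN p T := by
  have hre := le_wN p T 0
  have him := le_wN p T (-(Real.pi / 2))
  rw [reOp_exp_zero_smul] at hre
  rw [reOp_exp_neg_pi_div_two_smul] at him
  linarith [seminorm_le_reOp_add_imOp p T]

lemma sq_lower_bound_le_sq_two_mul_dwN (T : H →L[ℂ] H) :
    (3 / 4) * p T ^ 2 + 2 * p (absOp T) ^ 4
      + (|p (reOp T) ^ 2 + p (absOp T) ^ 4 - wN p T ^ 2| + |p (imOp T) ^ 2 - p (absOp T) ^ 4|)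
      + 2 * |max (p (reOp T) ^ 2 + p (absOp T) ^ 4) (wN p T ^ 2)
          - max (p (imOp T) ^ 2) (p (absOp T) ^ 4)| ≤ (2 * dwN p T) ^ 2 := by
  have hReAbs := sq_reOp_add_pow_four_absOp_le_sq_dwN p T
  have hW0 : 0 ≤ wN p T := (apply_nonneg p _).trans (le_wN p T 0)
  have hAbs : p (absOp T) ^ 4 ≤ dwN p T ^ 2 := by linarith [sq_nonneg (p (reOp T))]
  have hMax := abs_sub_add_abs_sub_add_two_mul_abs_max_sub_max_le hReAbs
    (pow_le_pow_left₀ hW0 (wN_le_dwN p T) 2)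
    (pow_le_pow_left₀ (apply_nonneg p _) (imOp_le_dwN p T) 2) hAbs
  have hT : (3 / 4) * p T ^ 2 ≤ p (reOp T) ^ 2 + p (imOp T) ^ 2 + wN p T ^ 2 := by
    nlinarith [seminorm_le_reOp_add_imOp p T, seminorm_le_two_mul_wN p T, apply_nonneg p T,
      sq_nonneg (p (reOp T) - p (imOp T))]
  linarith

end Seminorm

theorem stmt_11_general (N : (H →L[ℂ] H) → ℝ) (T : H →L[ℂ] H)
    (hNadd : ∀ A B : H →L[ℂ] H, N (A + B) ≤ N A + N B)
    (hNsmul : ∀ (c : ℂ) (A : H →L[ℂ] H), N (c • A) = ‖c‖ * N A)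
    (m₁ m₂ d₁ d₂ : ℝ)
    (hm₁ : m₁ = max ((N (reOp T)) ^ 2 + (N (absOp T)) ^ 4) ((wN N T) ^ 2))
    (hm₂ : m₂ = max ((N (imOp T)) ^ 2) ((N (absOp T)) ^ 4))
    (hd₁ : d₁ = |(N (reOp T)) ^ 2 + (N (absOp T)) ^ 4 - (wN N T) ^ 2|)
    (hd₂ : d₂ = |(N (imOp T)) ^ 2 - (N (absOp T)) ^ 4|) :
    dwN N T ≥ (1 / 2) * Real.sqrt ((3 / 4) * (N T) ^ 2 + 2 * (N (absOp T)) ^ 4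
      + (d₁ + d₂) + 2 * |m₁ - m₂|) := by
  subst hm₁ hm₂ hd₁ hd₂
  let p : Seminorm ℂ (H →L[ℂ] H) := Seminorm.of N hNadd hNsmul
  have hD0 : 0 ≤ dwN p T := (apply_nonneg p _).trans (imOp_le_dwN p T)
  calc (1 / 2) * Real.sqrt _ ≤ (1 / 2) * Real.sqrt ((2 * dwN p T) ^ 2) := by
        gcongr; exact sq_lower_bound_le_sq_two_mul_dwN p T
    _ = dwN p T := by rw [Real.sqrt_sq (by positivity)]; ring

theorem stmt_11 (N : (H →L[ℂ] H) → ℝ) (T : H →L[ℂ] H)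
    (hN0 : ∀ A : H →L[ℂ] H, 0 ≤ N A)
    (hNeq : ∀ A : H →L[ℂ] H, N A = 0 → A = 0)
    (hNadd : ∀ A B : H →L[ℂ] H, N (A + B) ≤ N A + N B)
    (hNsmul : ∀ (c : ℂ) (A : H →L[ℂ] H), N (c • A) = ‖c‖ * N A)
    (m₁ m₂ d₁ d₂ : ℝ)
    (hm₁ : m₁ = max ((N (reOp T)) ^ 2 + (N (absOp T)) ^ 4) ((wN N T) ^ 2))
    (hm₂ : m₂ = max ((N (imOp T)) ^ 2) ((N (absOp T)) ^ 4))
    (hd₁ : d₁ = |(N (reOp T)) ^ 2 + (N (absOp T)) ^ 4 - (wN N T) ^ 2|)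
    (hd₂ : d₂ = |(N (imOp T)) ^ 2 - (N (absOp T)) ^ 4|) :
    dwN N T ≥ (1 / 2) * Real.sqrt ((3 / 4) * (N T) ^ 2 + 2 * (N (absOp T)) ^ 4
      + (d₁ + d₂) + 2 * |m₁ - m₂|) :=
  stmt_11_general N T hNadd hNsmul m₁ m₂ d₁ d₂ hm₁ hm₂ hd₁ hd₂
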